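/- Let V be a vertex algebra, σ an automorphism with σ^T = 1, (W, Y_W) a right σ-twisted V-module, and z₀ any complex number. Define Y_W^{(z₀)}(v,x) = Y_W(v, x+z₀) for v ∈ V (which exists in Hom(W, W((x^{−1/T}))) since Y_W(v,x)w ∈ W((x^{−1/T}))). Then (W, Y_W^{(z₀)}) carries the structure of a right σ-twisted V-module. -/

import Mathlib

open scoped BigOperators

noncomputable section

/-- The generalized binomial coefficient `binom(a, n)` for `a : ℂ`, `n : ℕ`. -/
def cbinom (a : ℂ) (n : ℕ) : ℂ := (∏ i ∈ Finset.range n, (a - (i : ℂ))) / (n.factorial : ℂ)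

/-- The argument of a complex number normalized to lie in `[0, 2π)`. -/
def argB (ξ : ℂ) : ℝ := if 0 ≤ Complex.arg ξ then Complex.arg ξ else Complex.arg ξ + 2 * Real.pi

/-- The branch of the logarithm with `log ξ = ln |ξ| + i arg ξ`, `0 ≤ arg ξ < 2π`. -/
def logB (ξ : ℂ) : ℂ := (Real.log ‖ξ‖ : ℂ) + (argB ξ : ℂ) * Complex.I

/-- `ξ ^ α = e^{α log ξ}` with the chosen branch of `log`. -/
def bpow (ξ α : ℂ) : ℂ := Complex.exp (α * logB ξ)

/-- `e^{α π i}`. -/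
def epi (α : ℂ) : ℂ := Complex.exp (α * (Real.pi : ℂ) * Complex.I)

/-!  Formal series are recorded by the coefficient function `f : ℂ → ·`, where `f n` is the
coefficient of `x^{-n-1}`.  The following are the coefficients of the products with
`(x-z)^β`, `(z-x)^β`, `(x+z)^β`, `(z+x)^β` (with the expansion conventions
`(x ± ξ)^β = Σ_{j≥0} binom(β,j) (±ξ)^j x^{β-j}` and
`(ξ ± x)^β = Σ_{j≥0} binom(β,j) ξ^{β-j} (±x)^j`, where `ξ^γ` uses the chosen branch),
and of the substitution `f(x+z)`. -/

/-- Coefficient of `x^{-n-1}` in `(x-z)^β f(x)`. -/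
def mulXZ (z β : ℂ) (f : ℂ → ℂ) (n : ℂ) : ℂ :=
  ∑ᶠ i : ℕ, cbinom β i * (-z) ^ i * f (n + β - (i : ℂ))

/-- Coefficient of `x^{-n-1}` in `(z-x)^β f(x)`. -/
def mulZX (z β : ℂ) (f : ℂ → ℂ) (n : ℂ) : ℂ :=
  ∑ᶠ i : ℕ, cbinom β i * bpow z (β - (i : ℂ)) * (-1 : ℂ) ^ i * f (n + (i : ℂ))

/-- Coefficient of `x^{-n-1}` in `(x+z)^β f(x)`. -/
def mulXpZ (z β : ℂ) (f : ℂ → ℂ) (n : ℂ) : ℂ :=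
  ∑ᶠ i : ℕ, cbinom β i * z ^ i * f (n + β - (i : ℂ))

/-- Coefficient of `x^{-n-1}` in `(z+x)^β f(x)`. -/
def mulZpX (z β : ℂ) (f : ℂ → ℂ) (n : ℂ) : ℂ :=
  ∑ᶠ i : ℕ, cbinom β i * bpow z (β - (i : ℂ)) * f (n + (i : ℂ))

/-- Coefficient of `x^{-n-1}` in `f(x+z) = (e^{z d/dx} f)(x)`. -/
def substZ (z : ℂ) (f : ℂ → ℂ) (n : ℂ) : ℂ :=
  ∑ᶠ i : ℕ, cbinom ((i : ℂ) - n - 1) i * z ^ i * f (n - (i : ℂ))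

/-- A vertex algebra over `ℂ`, presented by its components `Y u n = u_n`, with the
Jacobi identity in (componentwise) Borcherds form. -/
structure VertexAlg (V : Type*) [AddCommGroup V] [Module ℂ V] where
  Y : V →ₗ[ℂ] ℤ → V →ₗ[ℂ] V
  one : V
  trunc : ∀ u v : V, ∃ N : ℤ, ∀ n : ℤ, N ≤ n → Y u n v = 0
  vacuum_eq : ∀ (n : ℤ) (v : V), Y one n v = if n = -1 then v else 0
  create : ∀ (u : V) (n : ℤ), 0 ≤ n → Y u n one = 0
  create' : ∀ u : V, Y u (-1) one = u
  jacobi : ∀ (u v w : V) (a b c : ℤ),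
    (∑ᶠ i : ℕ, ((-1 : ℂ) ^ i * cbinom (a : ℂ) i) •
      (Y u (a + b - (i : ℤ)) (Y v (c + (i : ℤ)) w)
        - ((-1 : ℂ) ^ a) • Y v (a + c - (i : ℤ)) (Y u (b + (i : ℤ)) w)))
    = ∑ᶠ i : ℕ, cbinom (b : ℂ) i • Y (Y u (a + (i : ℤ)) v) (b + c - (i : ℤ)) w

/-- An automorphism of a vertex algebra. -/
structure VAAut {V : Type*} [AddCommGroup V] [Module ℂ V] (A : VertexAlg V) where
  g : V ≃ₗ[ℂ] V
  map_one : g A.one = A.one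
  map_Y : ∀ (u : V) (n : ℤ) (v : V), g (A.Y u n v) = A.Y (g u) n (g v)

/-- `v` lies in the eigenspace `V^j = {v | σ v = e^{2πij/T} v}`. -/
def eig {V : Type*} [AddCommGroup V] [Module ℂ V] {A : VertexAlg V}
    (σ : VAAut A) (T : ℕ) (j : ℤ) (v : V) : Prop :=
  σ.g v = Complex.exp (2 * (Real.pi : ℂ) * Complex.I * (j : ℂ) / (T : ℂ)) • v

/-- A (weak) `σ`-twisted module for a vertex algebra, presented componentwise:
`Y v n` is the coefficient of `x^{-n-1}` in `Y_W(v,x)`; the `σ`-twisted Jacobi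
identity is stated coefficientwise. -/
structure TwistedModule {V : Type*} [AddCommGroup V] [Module ℂ V]
    (W : Type*) [AddCommGroup W] [Module ℂ W]
    (A : VertexAlg V) (σ : VAAut A) (T : ℕ) where
  Y : V →ₗ[ℂ] ℂ → W →ₗ[ℂ] W
  vacuum_eq : ∀ (n : ℂ) (w : W), Y A.one n w = if n = -1 then w else 0
  latt : ∀ (v : V) (n : ℂ), (∀ m : ℤ, n ≠ (m : ℂ) / (T : ℂ)) → Y v n = 0
  eig_supp : ∀ (j : ℤ) (v : V), eig σ T j v →
    ∀ n : ℂ, (∀ m : ℤ, n ≠ (j : ℂ) / (T : ℂ) + (m : ℂ)) → Y v n = 0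
  trunc : ∀ (v : V) (w : W), ∃ N : ℤ, ∀ m : ℤ, N ≤ m → Y v ((m : ℂ) / (T : ℂ)) w = 0
  jacobi : ∀ (j : ℤ) (u : V), eig σ T j u → ∀ (v : V) (w : W) (a b c : ℤ),
    (∑ᶠ i : ℕ, ((-1 : ℂ) ^ i * cbinom (a : ℂ) i) •
      (Y u ((a : ℂ) + (b : ℂ) / (T : ℂ) - (i : ℂ)) (Y v ((c : ℂ) / (T : ℂ) + (i : ℂ)) w)
        - ((-1 : ℂ) ^ a) •
          Y v ((a : ℂ) + (c : ℂ) / (T : ℂ) - (i : ℂ)) (Y u ((b : ℂ) / (T : ℂ) + (i : ℂ)) w)))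
    = if (T : ℤ) ∣ (b - j) then
        (∑ᶠ i : ℕ, cbinom ((b : ℂ) / (T : ℂ)) i •
          Y (A.Y u (a + (i : ℤ)) v) ((b : ℂ) / (T : ℂ) + (c : ℂ) / (T : ℂ) - (i : ℂ)) w)
      else 0

/-- A right `σ`-twisted module for a vertex algebra, presented componentwise
(opposite twisted Jacobi identity, coefficientwise). -/
structure RightTwistedModule {V : Type*} [AddCommGroup V] [Module ℂ V]
    (W : Type*) [AddCommGroup W] [Module ℂ W]
    (A : VertexAlg V) (σ : VAAut A) (T : ℕ) where
  Y : V →ₗ[ℂ] ℂ → W →ₗ[ℂ] W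
  vacuum_eq : ∀ (n : ℂ) (w : W), Y A.one n w = if n = -1 then w else 0
  latt : ∀ (v : V) (n : ℂ), (∀ m : ℤ, n ≠ (m : ℂ) / (T : ℂ)) → Y v n = 0
  trunc : ∀ (v : V) (w : W), ∃ N : ℤ, ∀ m : ℤ, m ≤ N → Y v ((m : ℂ) / (T : ℂ)) w = 0
  jacobi : ∀ (j : ℤ) (u : V), eig σ T j u → ∀ (v : V) (w : W) (a b c : ℤ),
    (∑ᶠ i : ℕ, ((-1 : ℂ) ^ i * cbinom (a : ℂ) i) •
      (Y v ((c : ℂ) / (T : ℂ) + (i : ℂ)) (Y u ((a : ℂ) + (b : ℂ) / (T : ℂ) - (i : ℂ)) w)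
        - ((-1 : ℂ) ^ a) •
          Y u ((b : ℂ) / (T : ℂ) + (i : ℂ)) (Y v ((a : ℂ) + (c : ℂ) / (T : ℂ) - (i : ℂ)) w)))
    = if (T : ℤ) ∣ (b + j) then
        (∑ᶠ i : ℕ, cbinom ((b : ℂ) / (T : ℂ)) i •
          Y (A.Y u (a + (i : ℤ)) v) ((b : ℂ) / (T : ℂ) + (c : ℂ) / (T : ℂ) - (i : ℂ)) w)
      else 0

/-!
Put `ζ = -z₀`, so that the coefficients of `Y_W(v, x + z₀)` are
`Σₖ binom(n, k) ζ^k (Y_W v)_{n-k}`. Substituting `xᵢ ↦ xᵢ + z₀` in the Jacobi identity leaves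
`x₁ - x₂` unchanged. Coefficientwise, Chu–Vandermonde shows that every coefficient of the
shifted identity is the combination `Σ_{m,p} binom(b/T, m) binom(c/T, p) ζ^{m+p}` of the
coefficients of the original one at `(a, b - mT, c - pT)`. On the left-hand side this also needs
`Σ_{k+l=s} (-1)^k binom(α, k) binom(α - k, l) = δ_{s,0}`, the coefficientwise form of the
translation invariance of `(x₁ - x₂)^α`. The truncation of `Y_W` keeps every sum finite.
-/

open Filter Finset

lemma cbinom_eq_choose : cbinom = Ring.choose := by
  ext a n
  rw [Ring.choose_eq_smul, ← Polynomial.aeval_eq_smeval, ← Polynomial.eval_map_algebraMap,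
    descPochhammer_map, descPochhammer_eval_eq_prod_range, cbinom, smul_eq_mul, div_eq_inv_mul]

lemma cbinom_natCast_sub_sub_one (n : ℂ) (i : ℕ) :
    cbinom ((i : ℂ) - n - 1) i = (-1) ^ i * cbinom n i := by
  rw [cbinom_eq_choose, show (i : ℂ) - n - 1 = -(n + 1 - i) by ring, Ring.choose_neg,
    show n + 1 - i + i - 1 = n by ring, Units.smul_def, Int.coe_negOnePow_natCast, zsmul_eq_mul]
  push_cast
  ring

lemma choose_mul_choose_sub_comm (x : ℂ) (m i : ℕ) :
    Ring.choose x m * Ring.choose (x - m) i = Ring.choose x i * Ring.choose (x - i) m := by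
  have h₁ := Ring.choose_smul_choose x (Nat.le_add_right m i)
  have h₂ := Ring.choose_smul_choose x (Nat.le_add_left i m)
  rw [Nat.add_sub_cancel_left] at h₁
  rw [Nat.add_sub_cancel, ← Nat.choose_symm_add] at h₂
  rw [← h₁, h₂]

lemma choose_add_mul_choose_natCast (x : ℂ) (t k : ℕ) :
    Ring.choose x (t + k) * Ring.choose ((t + k : ℕ) : ℂ) k
      = Ring.choose x k * Ring.choose (x - k) t := by
  rw [Ring.choose_natCast, mul_comm, ← nsmul_eq_mul, Ring.choose_smul_choose x (by omega),
    Nat.add_sub_cancel]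

lemma sum_neg_one_pow_mul_choose_mul_choose (α : ℂ) (n : ℕ) :
    ∑ k ∈ range (n + 1), (-1) ^ k * Ring.choose α k * Ring.choose (α - k) (n - k)
      = if n = 0 then 1 else 0 := by
  have h := congrArg (Int.cast : ℤ → ℂ) (Int.alternating_sum_range_choose (n := n))
  push_cast at h
  calc ∑ k ∈ range (n + 1), (-1) ^ k * Ring.choose α k * Ring.choose (α - k) (n - k)
      = Ring.choose α n * ∑ k ∈ range (n + 1), (-1) ^ k * (n.choose k : ℂ) := by
        rw [mul_sum]
        refine sum_congr rfl fun k hk => ?_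
        rw [mul_assoc, ← Ring.choose_smul_choose α (Nat.lt_succ_iff.1 (mem_range.1 hk)),
          nsmul_eq_mul]
        ring
    _ = if n = 0 then 1 else 0 := by
        rw [h]
        split_ifs with hn
        · rw [hn, Ring.choose_zero_right, mul_one]
        · rw [mul_zero]

section FiniteSums

variable {X : Type*}

section AddCommMonoid

variable [AddCommMonoid X]

lemma sum_range_eq_of_eq_zero_of_le {f : ℕ → X} {K N : ℕ} (hKN : K ≤ N) (hf : ∀ i, K ≤ i → f i = 0) :
    ∑ i ∈ range N, f i = ∑ i ∈ range K, f i :=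
  (sum_subset (range_subset_range.2 hKN) fun i _ hi => hf i (by simpa using hi)).symm

lemma finsum_eq_sum_range {f : ℕ → X} {N : ℕ} (hf : ∀ i, N ≤ i → f i = 0) :
    ∑ᶠ i, f i = ∑ i ∈ range N, f i :=
  finsum_eq_sum_of_support_subset f fun i hi => by
    simpa using not_le.1 fun h => hi (hf i h)

lemma sum_range_eq_sum_range_add {F : ℕ → X} (k N : ℕ) (hlt : ∀ i < k, F i = 0)
    (hge : ∀ i, N ≤ i → F i = 0) : ∑ i ∈ range N, F i = ∑ t ∈ range N, F (t + k) := by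
  rw [← sum_range_eq_of_eq_zero_of_le (Nat.le_add_left N k) hge, sum_range_add,
    sum_eq_zero fun i hi => hlt i (mem_range.1 hi), zero_add]
  simp only [add_comm k]

lemma sum_range_sum_range_eq_sum_diag {f : ℕ → ℕ → X} {N : ℕ}
    (hf : ∀ k l, N ≤ k + l → f k l = 0) :
    ∑ k ∈ range N, ∑ l ∈ range N, f k l = ∑ s ∈ range N, ∑ k ∈ range (s + 1), f k (s - k) := by
  rw [sum_range_diag_flip]
  refine sum_congr rfl fun k hk => sum_range_eq_of_eq_zero_of_le (by omega) fun l hl => hf k l (by omega)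

end AddCommMonoid

variable [AddCommGroup X] [Module ℂ X]

lemma sum_choose_add_smul (x y ζ : ℂ) {N : ℕ} (Z : ℕ → X) (hZ : ∀ l, N ≤ l → Z l = 0) :
    ∑ l ∈ range N, (Ring.choose (x + y) l * ζ ^ l) • Z l
      = ∑ l₁ ∈ range N, ∑ l₂ ∈ range N,
          (Ring.choose x l₁ * Ring.choose y l₂ * ζ ^ (l₁ + l₂)) • Z (l₁ + l₂) := by
  rw [sum_range_sum_range_eq_sum_diag fun k l h => by rw [hZ _ h, smul_zero]]
  refine sum_congr rfl fun s _ => ?_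
  rw [Ring.add_choose_eq _ (Commute.all x y), Nat.sum_antidiagonal_eq_sum_range_succ_mk,
    sum_mul, sum_smul]
  refine sum_congr rfl fun k hk => ?_
  rw [Nat.add_sub_cancel' (Nat.lt_succ_iff.1 (mem_range.1 hk))]

lemma sum_sum_neg_one_pow_choose_smul (α : ℂ) {N : ℕ} (g : ℕ → X) (hg : ∀ s, N ≤ s → g s = 0) :
    ∑ k ∈ range N, ∑ l ∈ range N,
      ((-1) ^ k * Ring.choose α k * Ring.choose (α - k) l) • g (k + l) = g 0 := by
  rw [sum_range_sum_range_eq_sum_diag fun k l h => by rw [hg _ h, smul_zero]]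
  have hdiag : ∀ s ∈ range N, ∑ k ∈ range (s + 1),
      ((-1) ^ k * Ring.choose α k * Ring.choose (α - k) (s - k)) • g (k + (s - k))
        = (if s = 0 then (1 : ℂ) else 0) • g s := by
    intro s _
    rw [← sum_neg_one_pow_mul_choose_mul_choose, sum_smul]
    refine sum_congr rfl fun k hk => ?_
    rw [Nat.add_sub_cancel' (Nat.lt_succ_iff.1 (mem_range.1 hk))]
  rw [sum_congr rfl hdiag]
  rcases Nat.eq_zero_or_pos N with rfl | hN
  · simp [hg 0 le_rfl]
  · rw [sum_eq_single_of_mem 0 (mem_range.2 hN) fun s _ hs => by rw [if_neg hs, zero_smul],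
      if_pos rfl, one_smul]

lemma sum_neg_one_pow_choose_smul_collapse (α ζ : ℂ) {N : ℕ} (Z : ℂ → ℕ → X)
    (hZ : ∀ c s, N ≤ s → Z c s = 0) :
    ∑ i ∈ range N, ∑ k ∈ range N, ∑ l ∈ range N,
      ((-1) ^ i * Ring.choose α i * Ring.choose (i : ℂ) k * Ring.choose (α - i) l
        * ζ ^ (k + l)) • Z ((i : ℂ) - k) (i + l)
      = ∑ i ∈ range N, ((-1) ^ i * Ring.choose α i) • Z i i := by
  set g : ℕ → ℕ → X := fun t s => ((-1) ^ t * Ring.choose (α - s) t * ζ ^ s) • Z t (t + s)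
  have hg : ∀ t s, N ≤ s → g t s = 0 := fun t s h => by
    simp only [g, hZ _ _ (h.trans (Nat.le_add_left s t)), smul_zero]
  have hshift : ∀ k ∈ range N, ∑ i ∈ range N, ∑ l ∈ range N,
      ((-1) ^ i * Ring.choose α i * Ring.choose (i : ℂ) k * Ring.choose (α - i) l
        * ζ ^ (k + l)) • Z ((i : ℂ) - k) (i + l)
      = ∑ t ∈ range N, ∑ l ∈ range N,
          ((-1) ^ k * Ring.choose α k * Ring.choose (α - k) l) • g t (k + l) := by
    intro k _
    rw [sum_range_eq_sum_range_add k N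
      (fun i hi => sum_eq_zero fun l _ => by
        rw [Ring.choose_natCast, Nat.choose_eq_zero_of_lt hi]; simp)
      (fun i hi => sum_eq_zero fun l _ => by
        rw [hZ _ _ (hi.trans (Nat.le_add_right i l)), smul_zero])]
    refine sum_congr rfl fun t _ => sum_congr rfl fun l _ => ?_
    have h₁ : Ring.choose α (t + k) * Ring.choose ((t : ℂ) + k) k
        = Ring.choose α k * Ring.choose (α - k) t := by
      exact_mod_cast choose_add_mul_choose_natCast α t k
    have h₂ : Ring.choose (α - k) t * Ring.choose (α - (t + k)) l
        = Ring.choose (α - k) l * Ring.choose (α - (k + l)) t := by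
      simpa only [sub_sub, add_comm (k : ℂ) t] using choose_mul_choose_sub_comm (α - k) t l
    simp only [g, smul_smul]
    rw [show ((t + k : ℕ) : ℂ) - k = t by push_cast; ring, show t + k + l = t + (k + l) by ring]
    congr 1
    push_cast
    rw [pow_add]
    linear_combination (-1) ^ t * (-1) ^ k * ζ ^ (k + l)
      * (Ring.choose (α - (t + k)) l * h₁ + Ring.choose α k * h₂)
  rw [sum_comm, sum_congr rfl hshift, sum_comm]
  refine sum_congr rfl fun t _ => ?_
  rw [sum_sum_neg_one_pow_choose_smul α (g t) (hg t)]
  simp only [g, Nat.cast_zero, sub_zero, pow_zero, mul_one, add_zero]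

lemma sum_sum_choose_add_smul (x x' y y' ζ : ℂ) {N : ℕ} (F : ℕ → ℕ → X)
    (hF : ∀ k l, N ≤ k ∨ N ≤ l → F k l = 0) :
    ∑ k ∈ range N, ∑ l ∈ range N,
      (Ring.choose (x + x') k * Ring.choose (y + y') l * ζ ^ (k + l)) • F k l
      = ∑ p ∈ range N, ∑ m ∈ range N, (Ring.choose x p * Ring.choose y m * ζ ^ (p + m)) •
          ∑ k ∈ range N, ∑ l ∈ range N,
            (Ring.choose x' k * Ring.choose y' l * ζ ^ (k + l)) • F (p + k) (m + l) := by
  set G : ℕ → X := fun k => ∑ m ∈ range N, ∑ l ∈ range N,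
    (Ring.choose y m * Ring.choose y' l * ζ ^ (m + l)) • F k (m + l)
  have hG : ∀ k, N ≤ k → G k = 0 := fun k hk =>
    sum_eq_zero fun m _ => sum_eq_zero fun l _ => by rw [hF k _ (Or.inl hk), smul_zero]
  calc ∑ k ∈ range N, ∑ l ∈ range N,
        (Ring.choose (x + x') k * Ring.choose (y + y') l * ζ ^ (k + l)) • F k l
      = ∑ k ∈ range N, (Ring.choose (x + x') k * ζ ^ k) •
          ∑ l ∈ range N, (Ring.choose (y + y') l * ζ ^ l) • F k l := by
        simp only [smul_sum, smul_smul, pow_add, mul_mul_mul_comm]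
    _ = ∑ k ∈ range N, (Ring.choose (x + x') k * ζ ^ k) • G k := by
        refine sum_congr rfl fun k _ => ?_
        rw [sum_choose_add_smul y y' ζ (F k) fun l hl => hF k l (Or.inr hl)]
    _ = ∑ p ∈ range N, ∑ k ∈ range N,
          (Ring.choose x p * Ring.choose x' k * ζ ^ (p + k)) • G (p + k) :=
        sum_choose_add_smul x x' ζ G hG
    _ = _ := by
        refine sum_congr rfl fun p _ => ?_
        simp only [G, smul_sum, smul_smul]
        rw [sum_comm]
        refine sum_congr rfl fun m _ => sum_congr rfl fun k _ => sum_congr rfl fun l _ => ?_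
        congr 1
        rw [pow_add, pow_add, pow_add]
        ring

/-- Coefficientwise, multiplication by `(x₁ - x₂)^α` commutes with `xᵢ ↦ xᵢ - ζ`. -/
lemma sum_neg_one_pow_choose_smul_shift_shift (α μ ν ζ : ℂ) {N : ℕ} (B : ℂ → ℂ → X)
    (hB₁ : ∀ x (s : ℕ), N ≤ s → B x (α + ν - s) = 0)
    (hB₂ : ∀ i k s : ℕ, i ≤ s → N ≤ k → B (μ + i - k) (α + ν - s) = 0) :
    ∑ i ∈ range N, ((-1) ^ i * Ring.choose α i) • ∑ k ∈ range N, ∑ l ∈ range N,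
        (Ring.choose (μ + i) k * Ring.choose (α + ν - i) l * ζ ^ (k + l)) •
          B (μ + i - k) (α + ν - i - l)
      = ∑ p ∈ range N, ∑ m ∈ range N, (Ring.choose μ p * Ring.choose ν m * ζ ^ (p + m)) •
          ∑ i ∈ range N, ((-1) ^ i * Ring.choose α i) • B (μ - p + i) (α + (ν - m) - i) := by
  set Z : ℕ → ℕ → ℂ → ℕ → X := fun p m c s => B (μ - p + c) (α + (ν - m) - s)
  have hZ : ∀ p m c s, N ≤ s → Z p m c s = 0 := fun p m c s hs => by
    simp only [Z, show α + (ν - m) - s = α + ν - ((m + s : ℕ) : ℂ) by push_cast; ring]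
    exact hB₁ _ (m + s) (hs.trans (Nat.le_add_left s m))
  have hexpand : ∀ i ∈ range N, ∑ k ∈ range N, ∑ l ∈ range N,
      (Ring.choose (μ + i) k * Ring.choose (α + ν - i) l * ζ ^ (k + l)) •
        B (μ + i - k) (α + ν - i - l)
      = ∑ p ∈ range N, ∑ m ∈ range N, (Ring.choose μ p * Ring.choose ν m * ζ ^ (p + m)) •
          ∑ k ∈ range N, ∑ l ∈ range N,
            (Ring.choose (i : ℂ) k * Ring.choose (α - i) l * ζ ^ (k + l)) •
              Z p m ((i : ℂ) - k) (i + l) := by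
    intro i _
    have hF : ∀ k l, N ≤ k ∨ N ≤ l → B (μ + i - k) (ν + (α - i) - l) = 0 := by
      rintro k l (hk | hl) <;>
        rw [show ν + (α - i) - l = α + ν - ((i + l : ℕ) : ℂ) by push_cast; ring]
      exacts [hB₂ i k _ (Nat.le_add_right i l) hk, hB₁ _ _ (hl.trans (Nat.le_add_left l i))]
    rw [show α + ν - (i : ℂ) = ν + (α - i) by ring,
      sum_sum_choose_add_smul μ i ν (α - i) ζ (fun k l => B (μ + i - k) (ν + (α - i) - l)) hF]
    refine sum_congr rfl fun p _ => sum_congr rfl fun m _ => ?_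
    congr 1
    refine sum_congr rfl fun k _ => sum_congr rfl fun l _ => ?_
    simp only [Z]
    congr 2 <;> push_cast <;> ring
  have hcollapse : ∀ p m : ℕ, ∑ i ∈ range N, ((-1) ^ i * Ring.choose α i) •
      B (μ - p + i) (α + (ν - m) - i)
      = ∑ i ∈ range N, ∑ k ∈ range N, ∑ l ∈ range N,
          ((-1) ^ i * Ring.choose α i * Ring.choose (i : ℂ) k * Ring.choose (α - i) l
            * ζ ^ (k + l)) • Z p m ((i : ℂ) - k) (i + l) := fun p m =>
    (sum_neg_one_pow_choose_smul_collapse α ζ (Z p m) (hZ p m)).symm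
  rw [sum_congr rfl fun i hi => by rw [hexpand i hi]]
  simp only [hcollapse, smul_sum, smul_smul]
  rw [sum_comm]
  refine sum_congr rfl fun p _ => ?_
  rw [sum_comm]
  refine sum_congr rfl fun m _ => sum_congr rfl fun i _ =>
    sum_congr rfl fun k _ => sum_congr rfl fun l _ => ?_
  congr 1
  ring

lemma sum_choose_smul_shift (β γ ζ : ℂ) {N : ℕ} (R : ℕ → ℂ → X)
    (hR : ∀ i s : ℕ, N ≤ s → R i (β + γ - s) = 0) :
    ∑ i ∈ range N, Ring.choose β i • ∑ k ∈ range N,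
        (Ring.choose (β + γ - i) k * ζ ^ k) • R i (β + γ - i - k)
      = ∑ m ∈ range N, ∑ p ∈ range N, (Ring.choose β m * Ring.choose γ p * ζ ^ (m + p)) •
          ∑ i ∈ range N, Ring.choose (β - m) i • R i (β - m + (γ - p) - i) := by
  have hexpand : ∀ i ∈ range N, ∑ k ∈ range N,
      (Ring.choose (β + γ - i) k * ζ ^ k) • R i (β + γ - i - k)
      = ∑ m ∈ range N, ∑ p ∈ range N, (Ring.choose (β - i) m * Ring.choose γ p * ζ ^ (m + p)) •
          R i (β - m + (γ - p) - i) := by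
    intro i _
    rw [show β + γ - (i : ℂ) = (β - i) + γ by ring,
      sum_choose_add_smul (β - i) γ ζ (fun k => R i (β - i + γ - k)) fun k hk => by
        simpa only [show β - i + γ - k = β + γ - ((i + k : ℕ) : ℂ) by push_cast; ring]
          using hR i (i + k) (hk.trans (Nat.le_add_left k i))]
    refine sum_congr rfl fun m _ => sum_congr rfl fun p _ => ?_
    congr 2
    push_cast
    ring
  rw [sum_congr rfl fun i hi => by rw [hexpand i hi]]
  simp only [smul_sum, smul_smul]
  rw [sum_comm]
  refine sum_congr rfl fun m _ => ?_
  rw [sum_comm]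
  refine sum_congr rfl fun p _ => sum_congr rfl fun i _ => ?_
  congr 1
  linear_combination Ring.choose γ p * ζ ^ (m + p) * choose_mul_choose_sub_comm β i m

end FiniteSums

section ShiftCoeff

variable {X : Type*} [AddCommGroup X] [Module ℂ X]

/-- The coefficient of `x^{-n-1}` in `f(x + z)`: this is `substZ` for vector-valued
coefficients, with `binom(k - n - 1, k) z^k` rewritten as `binom(n, k) (-z)^k`. -/
def shiftCoeff (z : ℂ) (f : ℂ → X) (n : ℂ) : X :=
  ∑ᶠ k : ℕ, (Ring.choose n k * (-z) ^ k) • f (n - k)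

variable {z : ℂ} {f g : ℂ → X} {n : ℂ}

lemma shiftCoeff_eq_sum_range {N : ℕ} (hf : ∀ k : ℕ, N ≤ k → f (n - k) = 0) :
    shiftCoeff z f n = ∑ k ∈ range N, (Ring.choose n k * (-z) ^ k) • f (n - k) :=
  finsum_eq_sum_range fun k hk => by rw [hf k hk, smul_zero]

lemma shiftCoeff_eq_zero (hf : ∀ k : ℕ, f (n - k) = 0) : shiftCoeff z f n = 0 := by
  simpa using shiftCoeff_eq_sum_range (z := z) (N := 0) fun k _ => hf k

lemma eventually_shiftCoeff_sub_eq_zero (hf : ∀ᶠ k : ℕ in atTop, f (n - k) = 0) :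
    ∀ᶠ i : ℕ in atTop, shiftCoeff z f (n - i) = 0 := by
  obtain ⟨K, hK⟩ := eventually_atTop.1 hf
  filter_upwards [eventually_ge_atTop K] with i hi
  exact shiftCoeff_eq_zero fun k => by
    rw [sub_sub, ← Nat.cast_add]
    exact hK _ (hi.trans (Nat.le_add_right i k))

lemma shiftCoeff_add (hf : ∀ᶠ k : ℕ in atTop, f (n - k) = 0)
    (hg : ∀ᶠ k : ℕ in atTop, g (n - k) = 0) :
    shiftCoeff z (fun m => f m + g m) n = shiftCoeff z f n + shiftCoeff z g n := by
  obtain ⟨K, hK⟩ := eventually_atTop.1 (hf.and hg)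
  rw [shiftCoeff_eq_sum_range fun k hk => (hK k hk).1,
    shiftCoeff_eq_sum_range fun k hk => (hK k hk).2,
    shiftCoeff_eq_sum_range fun k hk => by rw [(hK k hk).1, (hK k hk).2, add_zero],
    ← sum_add_distrib]
  simp only [smul_add]

lemma shiftCoeff_smul (c : ℂ) : shiftCoeff z (fun m => c • f m) n = c • shiftCoeff z f n := by
  simp only [shiftCoeff, smul_finsum, smul_comm c]


lemma finsum_smul_sub_smul (c : ℕ → ℂ) (e : ℂ) {x y : ℕ → X}
    (hx : ∀ᶠ i in atTop, x i = 0) (hy : ∀ᶠ i in atTop, y i = 0) :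
    ∑ᶠ i, c i • (x i - e • y i) = ∑ᶠ i, c i • x i - e • ∑ᶠ i, c i • y i := by
  obtain ⟨N, hN⟩ := eventually_atTop.1 (hx.and hy)
  rw [finsum_eq_sum_range fun i hi => by rw [(hN i hi).1, (hN i hi).2, smul_zero, sub_zero,
      smul_zero],
    finsum_eq_sum_range fun i hi => by rw [(hN i hi).1, smul_zero],
    finsum_eq_sum_range fun i hi => by rw [(hN i hi).2, smul_zero], smul_sum, ← sum_sub_distrib]
  simp only [smul_sub, smul_comm e]

lemma finsum_neg_one_pow_smul_shiftCoeff_shiftCoeff (P Q : ℂ → X →ₗ[ℂ] X) (w : X)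
    (α μ ν z : ℂ) {N : ℕ} (hQ : ∀ s : ℕ, N ≤ s → Q (α + ν - s) w = 0)
    (hPQ : ∀ i k s : ℕ, i ≤ s → N ≤ k → P (μ + i - k) (Q (α + ν - s) w) = 0) :
    ∑ᶠ i : ℕ, ((-1) ^ i * Ring.choose α i) •
        shiftCoeff z (fun m => P m (shiftCoeff z (fun m' => Q m' w) (α + ν - i))) (μ + i)
      = ∑ p ∈ range N, ∑ m ∈ range N, (Ring.choose μ p * Ring.choose ν m * (-z) ^ (p + m)) •
          ∑ᶠ i : ℕ, ((-1) ^ i * Ring.choose α i) • P (μ - p + i) (Q (α + (ν - m) - i) w) := by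
  have hQ' : ∀ i l : ℕ, N ≤ i + l → Q (α + ν - i - l) w = 0 := fun i l h => by
    rw [sub_sub, ← Nat.cast_add]
    exact hQ _ h
  have hinner : ∀ i : ℕ, shiftCoeff z (fun m' => Q m' w) (α + ν - i)
      = ∑ l ∈ range N, (Ring.choose (α + ν - i) l * (-z) ^ l) • Q (α + ν - i - l) w :=
    fun i => shiftCoeff_eq_sum_range fun l hl => hQ' i l (hl.trans (Nat.le_add_left l i))
  have hterm : ∀ i : ℕ,
      shiftCoeff z (fun m => P m (shiftCoeff z (fun m' => Q m' w) (α + ν - i))) (μ + i)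
      = ∑ k ∈ range N, ∑ l ∈ range N,
          (Ring.choose (μ + i) k * Ring.choose (α + ν - i) l * (-z) ^ (k + l)) •
            P (μ + i - k) (Q (α + ν - i - l) w) := by
    intro i
    rw [hinner, shiftCoeff_eq_sum_range (N := N) fun k hk => by
      simp only [map_sum, map_smul, sub_sub, ← Nat.cast_add,
        hPQ i k _ (Nat.le_add_right i _) hk, smul_zero, sum_const_zero]]
    simp only [map_sum, map_smul, smul_sum, smul_smul, pow_add, mul_mul_mul_comm]
  have hzero : ∀ i : ℕ, N ≤ i → shiftCoeff z (fun m' => Q m' w) (α + ν - i) = 0 :=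
    fun i hi => shiftCoeff_eq_zero fun l => hQ' i l (hi.trans (Nat.le_add_right i l))
  rw [finsum_eq_sum_range (N := N) fun i hi => by
      rw [hzero i hi, shiftCoeff_eq_zero fun k => map_zero _, smul_zero]]
  simp only [hterm]
  rw [sum_neg_one_pow_choose_smul_shift_shift α μ ν (-z) (fun x y => P x (Q y w))
    (fun x s hs => by simp only [hQ s hs, map_zero]) hPQ]
  refine sum_congr rfl fun p _ => sum_congr rfl fun m _ => ?_
  rw [finsum_eq_sum_range (N := N) fun i hi => by
    rw [show α + (ν - m) - i = α + ν - ((m + i : ℕ) : ℂ) by push_cast; ring,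
      hQ _ (hi.trans (Nat.le_add_left i m)), map_zero, smul_zero]]

lemma eventually_finsum_neg_one_pow_smul_shiftCoeff_shiftCoeff (P Q : ℂ → X →ₗ[ℂ] X)
    (w : X) (α μ ν z : ℂ) (hP : ∀ n x, ∀ᶠ k : ℕ in atTop, P (n - k) x = 0)
    (hQ : ∀ n, ∀ᶠ k : ℕ in atTop, Q (n - k) w = 0) :
    ∀ᶠ N : ℕ in atTop, ∑ᶠ i : ℕ, ((-1) ^ i * Ring.choose α i) •
        shiftCoeff z (fun m => P m (shiftCoeff z (fun m' => Q m' w) (α + ν - i))) (μ + i)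
      = ∑ p ∈ range N, ∑ m ∈ range N, (Ring.choose μ p * Ring.choose ν m * (-z) ^ (p + m)) •
          ∑ᶠ i : ℕ, ((-1) ^ i * Ring.choose α i) • P (μ - p + i) (Q (α + (ν - m) - i) w) := by
  obtain ⟨E, hE⟩ := eventually_atTop.1 (hQ (α + ν))
  obtain ⟨D, hD⟩ := eventually_atTop.1 <| (eventually_all_finset (range E ×ˢ range E)).2
    fun q _ => hP (μ + q.1) (Q (α + ν - q.2) w)
  filter_upwards [eventually_ge_atTop (max E D)] with N hN
  refine finsum_neg_one_pow_smul_shiftCoeff_shiftCoeff P Q w α μ ν z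
    (fun s hs => hE s (by omega)) fun i k s his hk => ?_
  by_cases hs : s < E
  · exact hD k (by omega) (i, s) (by simp only [mem_product, mem_range]; omega)
  · rw [hE s (by omega), map_zero]

lemma finsum_choose_smul_shiftCoeff (R : ℕ → ℂ → X) (β γ z : ℂ) {N : ℕ}
    (hR₀ : ∀ i n, N ≤ i → R i n = 0) (hR : ∀ i s : ℕ, N ≤ s → R i (β + γ - s) = 0) :
    ∑ᶠ i : ℕ, Ring.choose β i • shiftCoeff z (R i) (β + γ - i)
      = ∑ m ∈ range N, ∑ p ∈ range N, (Ring.choose β m * Ring.choose γ p * (-z) ^ (m + p)) •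
          ∑ᶠ i : ℕ, Ring.choose (β - m) i • R i (β - m + (γ - p) - i) := by
  rw [finsum_eq_sum_range (N := N) fun i hi => by
    rw [shiftCoeff_eq_zero fun k => hR₀ i _ hi, smul_zero]]
  rw [sum_congr rfl fun i _ => by
    rw [shiftCoeff_eq_sum_range (N := N) fun k hk => by
      rw [sub_sub, ← Nat.cast_add]
      exact hR i _ (hk.trans (Nat.le_add_left k i))]]
  rw [sum_choose_smul_shift β γ (-z) R hR]
  refine sum_congr rfl fun m _ => sum_congr rfl fun p _ => ?_
  rw [finsum_eq_sum_range (N := N) fun i hi => by rw [hR₀ i _ hi, smul_zero]]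

lemma eventually_finsum_choose_smul_shiftCoeff (R : ℕ → ℂ → X) (β γ z : ℂ)
    (hR₀ : ∀ᶠ i in atTop, ∀ n, R i n = 0) (hR : ∀ i n, ∀ᶠ k : ℕ in atTop, R i (n - k) = 0) :
    ∀ᶠ N : ℕ in atTop, ∑ᶠ i : ℕ, Ring.choose β i • shiftCoeff z (R i) (β + γ - i)
      = ∑ m ∈ range N, ∑ p ∈ range N, (Ring.choose β m * Ring.choose γ p * (-z) ^ (m + p)) •
          ∑ᶠ i : ℕ, Ring.choose (β - m) i • R i (β - m + (γ - p) - i) := by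
  obtain ⟨I, hI⟩ := eventually_atTop.1 hR₀
  obtain ⟨D, hD⟩ := eventually_atTop.1 <| (eventually_all_finset (range I)).2
    fun i _ => hR i (β + γ)
  filter_upwards [eventually_ge_atTop (max I D)] with N hN
  refine finsum_choose_smul_shiftCoeff R β γ z (fun i n hi => hI i (by omega) n)
    fun i s hs => ?_
  by_cases hi : i < I
  · exact hD s (by omega) i (mem_range.2 hi)
  · exact hI i (by omega) _

end ShiftCoeff

lemma intCast_div_sub_natCast {T : ℕ} (hT : 0 < T) (m : ℤ) (k : ℕ) :
    (m : ℂ) / T - k = ((m - k * T : ℤ) : ℂ) / T := by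
  have : (T : ℂ) ≠ 0 := Nat.cast_ne_zero.2 hT.ne'
  push_cast
  field_simp

lemma VertexAlg.eventually_Y_add_eq_zero {V : Type*} [AddCommGroup V] [Module ℂ V]
    (A : VertexAlg V) (u v : V) (a : ℤ) : ∀ᶠ i : ℕ in atTop, A.Y u (a + i) v = 0 := by
  obtain ⟨K, hK⟩ := A.trunc u v
  filter_upwards [eventually_ge_atTop (K - a).toNat] with i hi
  exact hK _ (by omega)

namespace RightTwistedModule

variable {V : Type*} [AddCommGroup V] [Module ℂ V] {W : Type*} [AddCommGroup W] [Module ℂ W]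
  {A : VertexAlg V} {σ : VAAut A} {T : ℕ} (M : RightTwistedModule W A σ T)

lemma Y_sub_natCast_eq_zero (hT : 0 < T) {n : ℂ} (hn : ∀ m : ℤ, n ≠ m / T) (v : V) (k : ℕ) :
    M.Y v (n - k) = 0 :=
  M.latt v _ fun m hm => hn (m + k * T) <| by
    have h := intCast_div_sub_natCast hT (m + k * T) k
    rw [add_sub_cancel_right, ← hm] at h
    linear_combination -h

lemma eventually_Y_sub_eq_zero (hT : 0 < T) (v : V) (n : ℂ) (x : W) :
    ∀ᶠ k : ℕ in atTop, M.Y v (n - k) x = 0 := by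
  by_cases hn : ∃ m : ℤ, n = m / T
  · obtain ⟨m, rfl⟩ := hn
    obtain ⟨N, hN⟩ := M.trunc v x
    filter_upwards [eventually_ge_atTop (m - N).toNat] with k hk
    rw [intCast_div_sub_natCast hT]
    refine hN _ ?_
    have : (k : ℤ) ≤ k * T := le_mul_of_one_le_right (Int.natCast_nonneg k) (by exact_mod_cast hT)
    omega
  · rw [not_exists] at hn
    exact Eventually.of_forall fun k => by rw [M.Y_sub_natCast_eq_zero hT hn]; rfl

def shiftedY (hT : 0 < T) (z : ℂ) : V →ₗ[ℂ] ℂ → W →ₗ[ℂ] W where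
  toFun v n :=
    { toFun := fun w => shiftCoeff z (fun m => M.Y v m w) n
      map_add' := fun w w' => by
        simp only [map_add]
        exact shiftCoeff_add (M.eventually_Y_sub_eq_zero hT v n w)
          (M.eventually_Y_sub_eq_zero hT v n w')
      map_smul' := fun c w => by
        simp only [map_smul]
        exact shiftCoeff_smul c }
  map_add' v v' := funext fun n => LinearMap.ext fun w => by
    simp only [map_add, LinearMap.add_apply, Pi.add_apply, LinearMap.coe_mk, AddHom.coe_mk]
    exact shiftCoeff_add (M.eventually_Y_sub_eq_zero hT v n w)
      (M.eventually_Y_sub_eq_zero hT v' n w)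
  map_smul' c v := funext fun n => LinearMap.ext fun w => by
    simp only [map_smul, LinearMap.smul_apply, Pi.smul_apply, LinearMap.coe_mk, AddHom.coe_mk,
      RingHom.id_apply]
    exact shiftCoeff_smul c

variable {M}

lemma shiftedY_apply {hT : 0 < T} {z : ℂ} (v : V) (n : ℂ) (w : W) :
    M.shiftedY hT z v n w = shiftCoeff z (fun m => M.Y v m w) n := rfl

lemma shiftedY_one (hT : 0 < T) (z n : ℂ) (w : W) :
    M.shiftedY hT z A.one n w = if n = -1 then w else 0 := by
  rw [shiftedY_apply, shiftCoeff, finsum_eq_single _ 0 fun k hk => ?_]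
  · simp only [Ring.choose_zero_right, pow_zero, mul_one, one_smul, Nat.cast_zero, sub_zero,
      M.vacuum_eq]
  rw [M.vacuum_eq]
  split_ifs with h
  · rw [show n = ((k - 1 : ℕ) : ℂ) by push_cast [Nat.one_le_iff_ne_zero.2 hk]; linear_combination h,
      Ring.choose_natCast, Nat.choose_eq_zero_of_lt (by omega), Nat.cast_zero, zero_mul, zero_smul]
  · rw [smul_zero]

lemma shiftedY_eq_zero (hT : 0 < T) (z : ℂ) (v : V) {n : ℂ} (hn : ∀ m : ℤ, n ≠ m / T) :
    M.shiftedY hT z v n = 0 :=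
  LinearMap.ext fun w => (shiftedY_apply v n w).trans <| shiftCoeff_eq_zero fun k => by
    rw [M.Y_sub_natCast_eq_zero hT hn]
    rfl

lemma exists_shiftedY_eq_zero (hT : 0 < T) (z : ℂ) (v : V) (w : W) :
    ∃ N : ℤ, ∀ m : ℤ, m ≤ N → M.shiftedY hT z v ((m : ℂ) / T) w = 0 := by
  obtain ⟨N, hN⟩ := M.trunc v w
  refine ⟨N, fun m hm => (shiftedY_apply v _ w).trans <| shiftCoeff_eq_zero fun k => ?_⟩
  rw [intCast_div_sub_natCast hT]
  exact hN _ (by nlinarith [Int.natCast_nonneg k, Int.natCast_nonneg T])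

lemma jacobi_sub_natCast (hT : 0 < T) {j : ℤ} {u : V} (hu : eig σ T j u) (v : V) (w : W)
    (a b c : ℤ) (m p : ℕ) :
    ∑ᶠ i : ℕ, ((-1) ^ i * Ring.choose (a : ℂ) i) •
        M.Y v ((c : ℂ) / T - p + i) (M.Y u (a + ((b : ℂ) / T - m) - i) w)
      - (-1 : ℂ) ^ a • ∑ᶠ i : ℕ, ((-1) ^ i * Ring.choose (a : ℂ) i) •
        M.Y u ((b : ℂ) / T - m + i) (M.Y v (a + ((c : ℂ) / T - p) - i) w)
    = if (T : ℤ) ∣ b + j then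
        ∑ᶠ i : ℕ, Ring.choose ((b : ℂ) / T - m) i •
          M.Y (A.Y u (a + i) v) ((b : ℂ) / T - m + ((c : ℂ) / T - p) - i) w
      else 0 := by
  have hdvd : (T : ℤ) ∣ b - m * T + j ↔ (T : ℤ) ∣ b + j := by
    rw [show b - m * T + j = b + j - m * T by ring]
    exact dvd_sub_left (dvd_mul_left _ _)
  have J := M.jacobi j u hu v w a (b - m * T) (c - p * T)
  rw [← intCast_div_sub_natCast hT, ← intCast_div_sub_natCast hT] at J
  simp only [hdvd, cbinom_eq_choose] at J
  rw [← finsum_smul_sub_smul _ _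
    ((M.eventually_Y_sub_eq_zero hT u _ w).mono fun i hi => by rw [hi, map_zero])
    ((M.eventually_Y_sub_eq_zero hT v _ w).mono fun i hi => by rw [hi, map_zero]), ← J]

lemma shiftedY_jacobi (hT : 0 < T) (z : ℂ) (j : ℤ) (u : V) (hu : eig σ T j u) (v : V) (w : W)
    (a b c : ℤ) :
    (∑ᶠ i : ℕ, ((-1 : ℂ) ^ i * cbinom (a : ℂ) i) •
      (M.shiftedY hT z v ((c : ℂ) / (T : ℂ) + (i : ℂ))
          (M.shiftedY hT z u ((a : ℂ) + (b : ℂ) / (T : ℂ) - (i : ℂ)) w)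
        - ((-1 : ℂ) ^ a) •
          M.shiftedY hT z u ((b : ℂ) / (T : ℂ) + (i : ℂ))
            (M.shiftedY hT z v ((a : ℂ) + (c : ℂ) / (T : ℂ) - (i : ℂ)) w)))
    = if (T : ℤ) ∣ (b + j) then
        (∑ᶠ i : ℕ, cbinom ((b : ℂ) / (T : ℂ)) i •
          M.shiftedY hT z (A.Y u (a + (i : ℤ)) v)
            ((b : ℂ) / (T : ℂ) + (c : ℂ) / (T : ℂ) - (i : ℂ)) w)
      else 0 := by
  have hY := M.eventually_Y_sub_eq_zero hT
  rw [cbinom_eq_choose, finsum_smul_sub_smul _ _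
    ((eventually_shiftCoeff_sub_eq_zero (z := z) (hY u _ w)).mono fun i hi => by
      rw [shiftedY_apply u, hi, map_zero])
    ((eventually_shiftCoeff_sub_eq_zero (z := z) (hY v _ w)).mono fun i hi => by
      rw [shiftedY_apply v, hi, map_zero])]
  simp only [shiftedY_apply]
  set β : ℂ := (b : ℂ) / T
  set γ : ℂ := (c : ℂ) / T
  obtain ⟨N, h₁, h₂, h₃⟩ := ((eventually_finsum_neg_one_pow_smul_shiftCoeff_shiftCoeff
    (M.Y v) (M.Y u) w a γ β z (hY v) fun n => hY u n w).and
    ((eventually_finsum_neg_one_pow_smul_shiftCoeff_shiftCoeff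
      (M.Y u) (M.Y v) w a β γ z (hY u) fun n => hY v n w).and
    (eventually_finsum_choose_smul_shiftCoeff (fun i n => M.Y (A.Y u (a + i) v) n w) β γ z
      ((A.eventually_Y_add_eq_zero u v a).mono fun i hi n => by rw [hi, map_zero]; rfl)
      fun i n => hY _ n w))).exists
  rw [h₁, h₂, h₃, sum_comm]
  calc _ = ∑ m ∈ range N, ∑ p ∈ range N, (Ring.choose β m * Ring.choose γ p * (-z) ^ (m + p)) •
          (if (T : ℤ) ∣ b + j then ∑ᶠ i : ℕ, Ring.choose (β - m) i •
            M.Y (A.Y u (a + i) v) (β - m + (γ - p) - i) w else 0) := by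
        rw [smul_sum, ← sum_sub_distrib]
        refine sum_congr rfl fun m _ => ?_
        rw [smul_sum, ← sum_sub_distrib]
        refine sum_congr rfl fun p _ => ?_
        rw [← M.jacobi_sub_natCast hT hu, smul_sub, smul_comm ((-1 : ℂ) ^ a),
          mul_comm (Ring.choose γ p), add_comm p]
    _ = _ := by
        split_ifs
        · rfl
        · simp only [smul_zero, sum_const_zero]

def shift (hT : 0 < T) (z : ℂ) : RightTwistedModule W A σ T where
  Y := M.shiftedY hT z
  vacuum_eq := M.shiftedY_one hT z
  latt _ _ hn := M.shiftedY_eq_zero hT z _ hn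
  trunc := M.exists_shiftedY_eq_zero hT z
  jacobi := M.shiftedY_jacobi hT z

end RightTwistedModule

theorem rightTwisted_shift_general
    (V : Type*) [AddCommGroup V] [Module ℂ V] (W : Type*) [AddCommGroup W] [Module ℂ W]
    (A : VertexAlg V) (σ : VAAut A) (T : ℕ) (hT : 0 < T)
    (M : RightTwistedModule W A σ T) (z₀ : ℂ) :
    ∃ M' : RightTwistedModule W A σ T, ∀ (v : V) (n : ℂ) (w : W),
      M'.Y v n w = ∑ᶠ i : ℕ, (cbinom ((i : ℂ) - n - 1) i * z₀ ^ i) • M.Y v (n - (i : ℂ)) w := by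
  refine ⟨M.shift hT z₀, fun v n w => finsum_congr fun i => ?_⟩
  rw [cbinom_natCast_sub_sub_one, cbinom_eq_choose, neg_pow, mul_right_comm, mul_comm]

/-- If `(W, Y_W)` is a right `σ`-twisted `V`-module and `z₀ ∈ ℂ`, then
`(W, Y_W^{(z₀)})`, where `Y_W^{(z₀)}(v,x) = Y_W(v, x+z₀) = e^{z₀ d/dx} Y_W(v,x)`, is again
a right `σ`-twisted `V`-module.  (Componentwise, the coefficient of `x^{-n-1}` in
`Y_W(v, x+z₀)` is `Σ_{i≥0} binom(i-n-1, i) z₀^i (Y_W v)_{n-i}`.) -/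
theorem rightTwisted_shift
    (V : Type*) [AddCommGroup V] [Module ℂ V] (W : Type*) [AddCommGroup W] [Module ℂ W]
    (A : VertexAlg V) (σ : VAAut A) (T : ℕ) (hT : 0 < T)
    (hord : ∀ v : V, (⇑σ.g)^[T] v = v)
    (M : RightTwistedModule W A σ T) (z₀ : ℂ) :
    ∃ M' : RightTwistedModule W A σ T, ∀ (v : V) (n : ℂ) (w : W),
      M'.Y v n w = ∑ᶠ i : ℕ, (cbinom ((i : ℂ) - n - 1) i * z₀ ^ i) • M.Y v (n - (i : ℂ)) w :=
  rightTwisted_shift_general V W A σ T hT M z₀
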